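/- arXiv:1308.5314 — 2 statements merged into one kernel-verified Lean document; each statement's English description precedes it below -/
import Mathlib

section
/- L^2-stability of the spectral method for a linear hyperbolic equation: if the N-degree trigonometric polynomial u_N(·,t) solves ∂_t u_N + ∂_x S_N[q(x) u_N] = 0 on the circle, with q ∈ C^1 2π-periodic, then ‖u_N(·,t)‖_{L^2}^2 ≤ e^{q'_∞ t} ‖u_N(·,0)‖_{L^2}^2 where q'_∞ = max_x |q'(x)|. -/
/-!
The Fourier coefficients of a trigonometric polynomial of degree `N` are recovered exactly by
the discrete Fourier transform at `2N + 1` equispaced nodes. That is a finite combination of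
point values, so the coefficients are differentiable in time, and by Parseval so is the energy
`E(t) = ∫ |u|²`. Since `∂ₓu` again lies in the span of the modes `|k| ≤ N`, the projection
`S_N` can be dropped from `∫ u ∂ₓ S_N[q u]` after integrating by parts, which gives
`E' = ∫ q ∂ₓ|u|² = -∫ q' |u|² ≤ q'_∞ E`; Grönwall's inequality concludes.
-/

/-- The `k`-th Fourier coefficient of a `2π`-periodic function `f : ℝ → ℂ`. -/
noncomputable def fc (f : ℝ → ℂ) (k : ℤ) : ℂ :=
  (1 / (2 * Real.pi)) • ∫ x in (0 : ℝ)..(2 * Real.pi),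
    f x * Complex.exp (-(Complex.I * (k : ℂ) * (x : ℂ)))

/-- The spectral Fourier projection `S_N f (x) = Σ_{|k|≤N} f̂(k) e^{ikx}`. -/
noncomputable def SN (N : ℕ) (f : ℝ → ℂ) (x : ℝ) : ℂ :=
  ∑ k ∈ Finset.Icc (-(N : ℤ)) (N : ℤ), fc f k * Complex.exp (Complex.I * (k : ℂ) * (x : ℂ))

/-- `f` is a trigonometric polynomial of degree at most `N`. -/
def IsTrigPoly (N : ℕ) (f : ℝ → ℂ) : Prop :=
  ∃ c : ℤ → ℂ, ∀ x : ℝ,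
    f x = ∑ k ∈ Finset.Icc (-(N : ℤ)) (N : ℤ), c k * Complex.exp (Complex.I * (k : ℂ) * (x : ℂ))

open Complex ComplexConjugate Finset intervalIntegral
open MeasureTheory (volume)
open scoped Real InnerProductSpace

lemma Function.Periodic.deriv {𝕜 F : Type*} [NontriviallyNormedField 𝕜] [NormedAddCommGroup F]
    [NormedSpace 𝕜 F] {f : 𝕜 → F} {c : 𝕜} (hf : Function.Periodic f c) :
    Function.Periodic (deriv f) c := fun x => by
  rw [← deriv_comp_add_const, hf.funext]

lemma Function.Periodic.abs_le_iSup_abs {g : ℝ → ℝ} {T : ℝ} (hg : Function.Periodic g T)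
    (hT : T ≠ 0) (hc : Continuous g) (x : ℝ) : |g x| ≤ ⨆ y, |g y| :=
  le_ciSup ((hg.comp abs).isBounded_of_continuous hT (continuous_abs.comp hc)).bddAbove x

lemma integral_mul_deriv_eq_neg_of_periodic {f g f' g' : ℝ → ℝ} {T : ℝ}
    (hf : ∀ x, HasDerivAt f (f' x) x) (hg : ∀ x, HasDerivAt g (g' x) x)
    (hf' : Continuous f') (hg' : Continuous g')
    (hfT : Function.Periodic f T) (hgT : Function.Periodic g T) :
    ∫ x in (0 : ℝ)..T, f x * g' x = -∫ x in (0 : ℝ)..T, f' x * g x := by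
  rw [integral_mul_deriv_eq_deriv_mul (fun x _ => hf x) (fun x _ => hg x)
    (hf'.intervalIntegrable _ _) (hg'.intervalIntegrable _ _), ← zero_add T, hfT 0, hgT 0]
  ring

lemma neg_integral_mul_le {g G : ℝ → ℝ} {K a b : ℝ} (hab : a ≤ b) (hg : Continuous g)
    (hG : Continuous G) (hgK : ∀ x, |g x| ≤ K) (hG0 : ∀ x, 0 ≤ G x) :
    -∫ x in a..b, g x * G x ≤ K * ∫ x in a..b, G x := by
  rw [← integral_neg, ← integral_const_mul]
  refine integral_mono hab ((hg.mul hG).neg.intervalIntegrable _ _)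
    ((continuous_const.mul hG).intervalIntegrable _ _) fun x => ?_
  nlinarith [neg_abs_le (g x), hgK x, hG0 x]

lemma le_exp_mul_of_hasDerivAt_le {E E' : ℝ → ℝ} {K t : ℝ} (hE : ∀ s, HasDerivAt E (E' s) s)
    (hbound : ∀ s, E' s ≤ K * E s) (ht : 0 ≤ t) : E t ≤ Real.exp (K * t) * E 0 := by
  have := le_gronwallBound_of_liminf_deriv_right_le (f' := E') (δ := E 0) (ε := 0)
    (fun s _ => (hE s).continuousAt.continuousWithinAt)
    (fun s _ _ hr => (hE s).hasDerivWithinAt.liminf_right_slope_le hr) le_rfl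
    (fun s _ => by rw [add_zero]; exact hbound s) t ⟨ht, le_rfl⟩
  rwa [gronwallBound_ε0, sub_zero, mul_comm] at this

noncomputable def fourierMode (k : ℤ) (x : ℝ) : ℂ := exp (I * k * x)

lemma hasDerivAt_fourierMode (k : ℤ) (x : ℝ) :
    HasDerivAt (fourierMode k) (I * k * fourierMode k x) x := by
  have h : HasDerivAt (fun y : ℝ => I * k * (y : ℂ)) (I * k) x := by
    simpa using (ofRealCLM.hasDerivAt (x := x)).const_mul (I * (k : ℂ))
  exact (h.cexp).congr_deriv (mul_comm _ _)

lemma continuous_fourierMode (k : ℤ) : Continuous (fourierMode k) := by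
  unfold fourierMode; fun_prop

lemma fourierMode_add (j k : ℤ) (x : ℝ) :
    fourierMode (j + k) x = fourierMode j x * fourierMode k x := by
  simp only [fourierMode, ← exp_add]; push_cast; ring_nf

lemma fourierMode_zero (x : ℝ) : fourierMode 0 x = 1 := by simp [fourierMode]

lemma conj_fourierMode (k : ℤ) (x : ℝ) : conj (fourierMode k x) = fourierMode (-k) x := by
  simp only [fourierMode, ← exp_conj, map_mul, conj_I, conj_ofReal, map_intCast]
  push_cast; ring_nf

lemma fourierMode_periodic (k : ℤ) : Function.Periodic (fourierMode k) (2 * π) := by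
  intro x
  have h : exp (I * k * (2 * π)) = 1 := by
    rw [← exp_int_mul_two_pi_mul_I k]; ring_nf
  simp only [fourierMode, ofReal_add, mul_add, exp_add]; push_cast; rw [h, mul_one]

lemma integral_fourierMode (k : ℤ) :
    ∫ x in (0 : ℝ)..2 * π, fourierMode k x = if k = 0 then (2 * π : ℂ) else 0 := by
  split_ifs with hk
  · simp [hk, fourierMode_zero]
  have hIk : I * k ≠ 0 := by simp [hk]
  have hderiv : ∀ x ∈ Set.uIcc (0 : ℝ) (2 * π),
      HasDerivAt (fun y => (I * k)⁻¹ * fourierMode k y) (fourierMode k x) x := fun x _ => by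
    have := (hasDerivAt_fourierMode k x).const_mul (I * k)⁻¹
    rwa [← mul_assoc, inv_mul_cancel₀ hIk, one_mul] at this
  rw [integral_eq_sub_of_hasDerivAt hderiv ((continuous_fourierMode k).intervalIntegrable _ _),
    ← zero_add (2 * π), fourierMode_periodic k 0, sub_self]

noncomputable def trigPoly (N : ℕ) (c : ℤ → ℂ) (x : ℝ) : ℂ :=
  ∑ k ∈ Icc (-(N : ℤ)) N, c k * fourierMode k x

lemma isTrigPoly_iff {N : ℕ} {f : ℝ → ℂ} : IsTrigPoly N f ↔ ∃ c, f = trigPoly N c := by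
  simp only [IsTrigPoly, funext_iff]; rfl

lemma SN_eq_trigPoly (N : ℕ) (f : ℝ → ℂ) : SN N f = trigPoly N (fc f) := rfl

lemma hasDerivAt_trigPoly (N : ℕ) (c : ℤ → ℂ) (x : ℝ) :
    HasDerivAt (trigPoly N c) (trigPoly N (fun k => I * k * c k) x) x := by
  refine (HasDerivAt.fun_sum fun k (_ : k ∈ Icc (-(N : ℤ)) N) =>
    (hasDerivAt_fourierMode k x).const_mul (c k)).congr_deriv ?_
  exact sum_congr rfl fun k _ => by ring

lemma continuous_trigPoly (N : ℕ) (c : ℤ → ℂ) : Continuous (trigPoly N c) :=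
  continuous_finsetSum _ fun k _ => continuous_const.mul (continuous_fourierMode k)

lemma trigPoly_periodic (N : ℕ) (c : ℤ → ℂ) : Function.Periodic (trigPoly N c) (2 * π) :=
  fun x => by simp only [trigPoly, fourierMode_periodic _ x]

lemma deriv_trigPoly (N : ℕ) (c : ℤ → ℂ) :
    deriv (trigPoly N c) = trigPoly N (fun k => I * k * c k) :=
  funext fun x => (hasDerivAt_trigPoly N c x).deriv

lemma isTrigPoly_SN (N : ℕ) (f : ℝ → ℂ) : IsTrigPoly N (SN N f) :=
  isTrigPoly_iff.2 ⟨fc f, rfl⟩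

lemma IsTrigPoly.deriv {N : ℕ} {f : ℝ → ℂ} (hf : IsTrigPoly N f) : IsTrigPoly N (deriv f) := by
  obtain ⟨c, rfl⟩ := isTrigPoly_iff.1 hf
  exact isTrigPoly_iff.2 ⟨_, deriv_trigPoly N c⟩

lemma IsTrigPoly.neg {N : ℕ} {f : ℝ → ℂ} (hf : IsTrigPoly N f) : IsTrigPoly N (-f) := by
  obtain ⟨c, rfl⟩ := isTrigPoly_iff.1 hf
  refine isTrigPoly_iff.2 ⟨-c, funext fun x => ?_⟩
  simp [trigPoly, sum_neg_distrib]

lemma IsTrigPoly.continuous {N : ℕ} {f : ℝ → ℂ} (hf : IsTrigPoly N f) : Continuous f := by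
  obtain ⟨c, rfl⟩ := isTrigPoly_iff.1 hf
  exact continuous_trigPoly N c

lemma integral_mul_fourierMode_neg (f : ℝ → ℂ) (k : ℤ) :
    ∫ x in (0 : ℝ)..2 * π, f x * fourierMode (-k) x = 2 * π * fc f k := by
  have hexp : ∀ x : ℝ, exp (-(I * k * x)) = fourierMode (-k) x := fun x => by
    simp only [fourierMode]; push_cast; ring_nf
  have h2π : (2 * π : ℂ) * ((1 / (2 * π) : ℝ) : ℂ) = 1 := by
    push_cast; field_simp
  simp only [fc, hexp, real_smul, ← mul_assoc, h2π, one_mul]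

lemma integral_mul_conj_trigPoly {f : ℝ → ℂ} (hf : IntervalIntegrable f volume 0 (2 * π))
    (N : ℕ) (c : ℤ → ℂ) :
    ∫ x in (0 : ℝ)..2 * π, f x * conj (trigPoly N c x)
      = 2 * π * ∑ k ∈ Icc (-(N : ℤ)) N, fc f k * conj (c k) := by
  have hexpand : ∀ x, f x * conj (trigPoly N c x)
      = ∑ k ∈ Icc (-(N : ℤ)) N, conj (c k) * (f x * fourierMode (-k) x) := fun x => by
    simp only [trigPoly, map_sum, map_mul, conj_fourierMode, mul_sum]
    exact sum_congr rfl fun k _ => by ring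
  simp only [hexpand]
  rw [integral_finsetSum fun k _ =>
    (hf.mul_continuousOn (continuous_fourierMode (-k)).continuousOn).const_mul _, mul_sum]
  refine sum_congr rfl fun k _ => ?_
  rw [integral_const_mul, integral_mul_fourierMode_neg]
  ring

lemma fc_trigPoly (N : ℕ) (c : ℤ → ℂ) {k : ℤ} (hk : k ∈ Icc (-(N : ℤ)) N) :
    fc (trigPoly N c) k = c k := by
  have h2π : (2 * π : ℂ) ≠ 0 := by simp [Real.pi_ne_zero]
  have hexpand : ∀ x, trigPoly N c x * fourierMode (-k) x
      = ∑ j ∈ Icc (-(N : ℤ)) N, c j * fourierMode (j - k) x := fun x => by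
    simp only [trigPoly, sum_mul, sub_eq_add_neg, fourierMode_add, mul_assoc]
  refine mul_left_cancel₀ h2π ?_
  rw [← integral_mul_fourierMode_neg, funext hexpand, integral_finsetSum fun j _ =>
    ((continuous_fourierMode _).intervalIntegrable _ _).const_mul _]
  simp only [integral_const_mul, integral_fourierMode, sub_eq_zero, mul_ite, mul_zero]
  rw [sum_ite_eq' _ k, if_pos hk, mul_comm]

lemma integral_inner_trigPoly_left {f : ℝ → ℂ}
    (hf : IntervalIntegrable f volume 0 (2 * π)) (N : ℕ) (c : ℤ → ℂ) :
    ∫ x in (0 : ℝ)..2 * π, ⟪trigPoly N c x, f x⟫_ℝ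
      = 2 * π * ∑ k ∈ Icc (-(N : ℤ)) N, ⟪c k, fc f k⟫_ℝ := by
  have hint : IntervalIntegrable (fun x => f x * conj (trigPoly N c x)) volume 0 (2 * π) :=
    hf.mul_continuousOn (continuous_conj.comp (continuous_trigPoly N c)).continuousOn
  have hre := intervalIntegral_re hint
  simp only [RCLike.re_to_complex] at hre
  simp only [Complex.inner]
  rw [hre, integral_mul_conj_trigPoly hf]
  simp [re_sum]

lemma integral_inner_trigPoly (N : ℕ) (c d : ℤ → ℂ) :
    ∫ x in (0 : ℝ)..2 * π, ⟪trigPoly N c x, trigPoly N d x⟫_ℝ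
      = 2 * π * ∑ k ∈ Icc (-(N : ℤ)) N, ⟪c k, d k⟫_ℝ := by
  rw [integral_inner_trigPoly_left ((continuous_trigPoly N d).intervalIntegrable _ _)]
  exact congrArg _ (sum_congr rfl fun k hk => by rw [fc_trigPoly N d hk])

lemma integral_norm_sq_trigPoly (N : ℕ) (c : ℤ → ℂ) :
    ∫ x in (0 : ℝ)..2 * π, ‖trigPoly N c x‖ ^ 2 = 2 * π * ∑ k ∈ Icc (-(N : ℤ)) N, ‖c k‖ ^ 2 := by
  simpa only [real_inner_self_eq_norm_sq] using integral_inner_trigPoly N c c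

lemma sum_fourierMode_equispaced {M : ℕ} (hM : M ≠ 0) {k : ℤ} (hk : k.natAbs < M) :
    ∑ m ∈ range M, fourierMode k (2 * π * m / M) = if k = 0 then (M : ℂ) else 0 := by
  set ζ := exp (2 * π * I / M)
  have hζ : IsPrimitiveRoot ζ M := isPrimitiveRoot_exp M hM
  have hpow : ∀ m : ℕ, fourierMode k (2 * π * m / M) = (ζ ^ k) ^ m := fun m => by
    rw [← exp_int_mul, ← exp_nat_mul, fourierMode]
    push_cast; ring_nf
  simp only [hpow]
  split_ifs with h0
  · simp [h0]
  have hne : ζ ^ k ≠ 1 := fun h =>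
    h0 (Int.eq_zero_of_dvd_of_natAbs_lt_natAbs ((hζ.zpow_eq_one_iff_dvd k).1 h) (by simpa))
  have hM1 : (ζ ^ k) ^ M = 1 := by
    rw [← zpow_natCast, ← zpow_mul, mul_comm, zpow_mul, zpow_natCast, hζ.pow_eq_one, one_zpow]
  rw [geom_sum_eq hne, hM1, sub_self, zero_div]

noncomputable def dftCoeff (M : ℕ) (f : ℝ → ℂ) (k : ℤ) : ℂ :=
  (M : ℂ)⁻¹ * ∑ m ∈ range M, f (2 * π * m / M) * fourierMode (-k) (2 * π * m / M)

lemma dftCoeff_trigPoly {N M : ℕ} (hNM : 2 * N < M) (c : ℤ → ℂ) {k : ℤ}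
    (hk : k ∈ Icc (-(N : ℤ)) N) : dftCoeff M (trigPoly N c) k = c k := by
  have hM : (M : ℂ) ≠ 0 := by exact_mod_cast (by omega : M ≠ 0)
  have hexpand : ∀ x, trigPoly N c x * fourierMode (-k) x
      = ∑ j ∈ Icc (-(N : ℤ)) N, c j * fourierMode (j - k) x := fun x => by
    simp only [trigPoly, sum_mul, sub_eq_add_neg, fourierMode_add, mul_assoc]
  have hsum : ∀ j ∈ Icc (-(N : ℤ)) N,
      ∑ m ∈ range M, c j * fourierMode (j - k) (2 * π * m / M) = if j = k then c j * M else 0 := by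
    intro j hj
    simp only [mem_Icc] at hj hk
    rw [← mul_sum, sum_fourierMode_equispaced (by omega) (by omega)]
    simp only [sub_eq_zero, mul_ite, mul_zero]
  simp only [dftCoeff, hexpand]
  rw [sum_comm, sum_congr rfl hsum, sum_ite_eq' _ k, if_pos hk]
  field_simp

lemma trigPoly_dftCoeff {N M : ℕ} (hNM : 2 * N < M) {f : ℝ → ℂ} (hf : IsTrigPoly N f) :
    trigPoly N (dftCoeff M f) = f := by
  obtain ⟨c, rfl⟩ := isTrigPoly_iff.1 hf
  exact funext fun x => sum_congr rfl fun k hk => by rw [dftCoeff_trigPoly hNM c hk]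

lemma hasDerivAt_dftCoeff (M : ℕ) {u : ℝ → ℝ → ℂ} {v : ℝ → ℂ} {t : ℝ}
    (hu : ∀ x, HasDerivAt (fun τ => u τ x) (v x) t) (k : ℤ) :
    HasDerivAt (fun τ => dftCoeff M (u τ) k) (dftCoeff M v k) t :=
  (HasDerivAt.fun_sum fun _ _ => (hu _).mul_const _).const_mul _

lemma hasDerivAt_integral_norm_sq {N : ℕ} {u : ℝ → ℝ → ℂ} {v : ℝ → ℂ} {t : ℝ}
    (hu : ∀ τ, IsTrigPoly N (u τ)) (hv : IsTrigPoly N v)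
    (hderiv : ∀ x, HasDerivAt (fun τ => u τ x) (v x) t) :
    HasDerivAt (fun τ => ∫ x in (0 : ℝ)..2 * π, ‖u τ x‖ ^ 2)
      (2 * ∫ x in (0 : ℝ)..2 * π, ⟪u t x, v x⟫_ℝ) t := by
  have hNM : 2 * N < 2 * N + 1 := Nat.lt_succ_self _
  set c : ℝ → ℤ → ℂ := fun τ => dftCoeff (2 * N + 1) (u τ)
  have hrep : ∀ τ, u τ = trigPoly N (c τ) := fun τ => (trigPoly_dftCoeff hNM (hu τ)).symm
  have henergy : (fun τ => ∫ x in (0 : ℝ)..2 * π, ‖u τ x‖ ^ 2)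
      = fun τ => 2 * π * ∑ k ∈ Icc (-(N : ℤ)) N, ‖c τ k‖ ^ 2 :=
    funext fun τ => by rw [hrep τ, integral_norm_sq_trigPoly]
  rw [henergy, hrep t, ← trigPoly_dftCoeff hNM hv, integral_inner_trigPoly, mul_left_comm, mul_sum]
  exact (HasDerivAt.fun_sum fun k _ => (hasDerivAt_dftCoeff _ hderiv k).norm_sq).const_mul _

lemma integral_inner_deriv_SN {f : ℝ → ℂ} (hf : IntervalIntegrable f volume 0 (2 * π))
    (N : ℕ) (c : ℤ → ℂ) :
    ∫ x in (0 : ℝ)..2 * π, ⟪trigPoly N c x, deriv (SN N f) x⟫_ℝ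
      = -∫ x in (0 : ℝ)..2 * π, ⟪deriv (trigPoly N c) x, f x⟫_ℝ := by
  rw [SN_eq_trigPoly, deriv_trigPoly, deriv_trigPoly, integral_inner_trigPoly,
    integral_inner_trigPoly_left hf, mul_sum, mul_sum, ← sum_neg_distrib]
  refine sum_congr rfl fun k _ => ?_
  simp only [Complex.inner, map_mul, conj_I, map_intCast, neg_mul, mul_neg, neg_re, neg_neg]
  ring_nf

lemma hasDerivAt_integral_norm_sq_spectral {N : ℕ} {q : ℝ → ℝ} {u : ℝ → ℝ → ℂ}
    (hq : ContDiff ℝ 1 q) (hqper : Function.Periodic q (2 * π))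
    (hpoly : ∀ t : ℝ, IsTrigPoly N (u t))
    (hpde : ∀ t x : ℝ, HasDerivAt (fun τ => u τ x)
        (-(deriv (fun y => SN N (fun z => (q z : ℂ) * u t z) y) x)) t) (t : ℝ) :
    HasDerivAt (fun τ => ∫ x in (0 : ℝ)..2 * π, ‖u τ x‖ ^ 2)
      (-∫ x in (0 : ℝ)..2 * π, deriv q x * ‖u t x‖ ^ 2) t := by
  set f : ℝ → ℂ := fun z => (q z : ℂ) * u t z
  obtain ⟨c, hc⟩ := isTrigPoly_iff.1 (hpoly t)
  have hqd : ∀ x, HasDerivAt q (deriv q x) x :=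
    fun x => (hq.differentiable one_ne_zero x).hasDerivAt
  have hud : ∀ x, HasDerivAt (u t) (deriv (u t) x) x := by
    rw [hc]; exact fun x => (hasDerivAt_trigPoly N c x).differentiableAt.hasDerivAt
  have hu := (hpoly t).continuous
  have hu' := (hpoly t).deriv.continuous
  have hf : IntervalIntegrable f volume 0 (2 * π) :=
    ((continuous_ofReal.comp hq.continuous).mul hu).intervalIntegrable _ _
  have hproj : ∫ x in (0 : ℝ)..2 * π, ⟪u t x, -deriv (SN N f) x⟫_ℝ
      = ∫ x in (0 : ℝ)..2 * π, q x * ⟪u t x, deriv (u t) x⟫_ℝ := by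
    simp only [inner_neg_right, integral_neg]
    rw [hc, integral_inner_deriv_SN hf, neg_neg, ← hc]
    refine integral_congr fun x _ => ?_
    rw [show f x = q x • u t x from (real_smul ..).symm, real_inner_smul_right, real_inner_comm]
  have hibp := integral_mul_deriv_eq_neg_of_periodic hqd (fun x => (hud x).norm_sq)
    (hq.continuous_deriv le_rfl) (by fun_prop) hqper (hc ▸ (trigPoly_periodic N c).comp (‖·‖ ^ 2))
  convert hasDerivAt_integral_norm_sq hpoly (isTrigPoly_SN N f).deriv.neg (hpde t) using 1
  simp only [Pi.neg_apply]
  rw [hproj, ← hibp, ← integral_const_mul]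
  exact integral_congr fun x _ => by ring

/-- **L²-stability of the spectral method for a linear hyperbolic equation.**
If the `N`-degree trigonometric polynomial `u(·,t)` solves `∂_t u + ∂_x S_N[q(x) u] = 0`
on the circle, with `q ∈ C¹` and `2π`-periodic, then
`‖u(·,t)‖² ≤ e^{q'_∞ t} ‖u(·,0)‖²` with `q'_∞ = max_x |q'(x)|`. -/
theorem stmt_4 (N : ℕ) (q : ℝ → ℝ) (u : ℝ → ℝ → ℂ)
    (hq : ContDiff ℝ 1 q) (hqper : Function.Periodic q (2 * Real.pi))
    (hpoly : ∀ t : ℝ, IsTrigPoly N (u t))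
    (hpde : ∀ t x : ℝ, HasDerivAt (fun τ => u τ x)
        (-(deriv (fun y => SN N (fun z => (q z : ℂ) * u t z) y) x)) t)
    (t : ℝ) (ht : 0 ≤ t) :
    (∫ x in (0 : ℝ)..(2 * Real.pi), ‖u t x‖ ^ 2)
      ≤ Real.exp ((⨆ x : ℝ, |deriv q x|) * t) * ∫ x in (0 : ℝ)..(2 * Real.pi), ‖u 0 x‖ ^ 2 := by
  have hq' : Continuous (deriv q) := hq.continuous_deriv le_rfl
  have hq'_le : ∀ x, |deriv q x| ≤ ⨆ y, |deriv q y| :=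
    hqper.deriv.abs_le_iSup_abs (by positivity) hq'
  refine le_exp_mul_of_hasDerivAt_le (hasDerivAt_integral_norm_sq_spectral hq hqper hpoly hpde)
    (fun s => ?_) ht
  exact neg_integral_mul_le (by positivity) hq' ((hpoly s).continuous.norm.pow 2) hq'_le
    fun x => by positivity
end

section
/- Total entropy conservation for the spectral approximation of the 1D isentropic Lagrangian equations: if the N-degree trigonometric polynomials (u_N, v_N) solve ∂_t u_N + ∂_x S_N q(v_N) = 0, ∂_t v_N + ∂_x u_N = 0 on the circle with q' > 0, then d/dt ∫ ( |u_N|²/2 + Q(v_N) ) dx = 0, where Q' = q. -/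
/-!
Write `w = q(v_N)`. By the two equations, the time derivative of the entropy density is
`-(u_N ∂ₓ S_N w + w ∂ₓ u_N)`. Since `u_N = Σ_{|k|≤N} a_k e^{ikx}` only sees the modes `|k| ≤ N`,
the truncation is invisible: in Fourier coefficients both integrals equal `± 2π Σ_k i k a_k ŵ(-k)`,
so they cancel. Differentiation under the integral sign is justified by joint continuity in
`(t, x)`: the coefficients of `u_N` and `v_N` are the discrete Fourier transforms of their values
at `2N + 1` nodes, hence continuous in time.
-/

open Complex Finset intervalIntegral
open scoped Real

namespace TrigPoly

variable {N : ℕ}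

noncomputable def trigSum (N : ℕ) (c : ℤ → ℂ) (x : ℝ) : ℂ :=
  ∑ k ∈ Icc (-(N : ℤ)) N, c k * exp (I * k * x)

theorem isTrigPoly_iff {f : ℝ → ℂ} : IsTrigPoly N f ↔ ∃ c, f = trigSum N c := by
  simp only [IsTrigPoly, funext_iff, trigSum]

theorem SN_eq_trigSum (f : ℝ → ℂ) : SN N f = trigSum N (fc f) := rfl

theorem continuous_exp_I_int_mul (k : ℤ) : Continuous fun x : ℝ ↦ exp (I * k * x) := by
  fun_prop

theorem continuous_uncurry_trigSum {X : Type*} [TopologicalSpace X] {c : X → ℤ → ℂ}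
    (hc : ∀ k, Continuous (c · k)) : Continuous fun p : X × ℝ ↦ trigSum N (c p.1) p.2 := by
  unfold trigSum
  refine continuous_finsetSum _ fun k _ ↦ ((hc k).comp continuous_fst).mul ?_
  exact (continuous_exp_I_int_mul k).comp continuous_snd

@[fun_prop]
theorem continuous_trigSum (c : ℤ → ℂ) : Continuous (trigSum N c) :=
  continuous_finsetSum _ fun k _ ↦ continuous_const.mul (continuous_exp_I_int_mul k)

theorem hasDerivAt_trigSum (c : ℤ → ℂ) (x : ℝ) :
    HasDerivAt (trigSum N c) (trigSum N (fun k ↦ I * k * c k) x) x := by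
  unfold trigSum
  refine HasDerivAt.fun_sum fun k _ ↦ ?_
  have h := (((hasDerivAt_id (x : ℂ)).const_mul (I * k)).cexp.comp_ofReal).const_mul (c k)
  simp only [id, mul_one] at h
  exact h.congr_deriv (by ring)

theorem deriv_trigSum (c : ℤ → ℂ) : deriv (trigSum N c) = trigSum N (fun k ↦ I * k * c k) :=
  funext fun x ↦ (hasDerivAt_trigSum c x).deriv

theorem integral_exp_I_int_mul (m : ℤ) :
    ∫ x in (0 : ℝ)..2 * π, exp (I * m * x) = if m = 0 then ((2 * π : ℝ) : ℂ) else 0 := by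
  split_ifs with hm
  · simp [hm]
  · have hc : I * m ≠ 0 := by simp [hm]
    rw [integral_exp_mul_complex hc, show I * m * ((2 * π : ℝ) : ℂ) = m * (2 * π * I) by
      push_cast; ring, exp_int_mul_two_pi_mul_I]
    simp

theorem integral_mul_exp_neg_I_int_mul (g : ℝ → ℂ) (k : ℤ) :
    ∫ x in (0 : ℝ)..2 * π, g x * exp (-(I * k * x)) = 2 * π * fc g k := by
  rw [fc, Complex.real_smul]
  push_cast
  field_simp

theorem fc_trigSum (a : ℤ → ℂ) {k : ℤ} (hk : k ∈ Icc (-(N : ℤ)) N) :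
    fc (trigSum N a) k = a k := by
  have hpi : (2 * π : ℂ) ≠ 0 := by exact_mod_cast Real.two_pi_pos.ne'
  have hterm (l : ℤ) (x : ℝ) : a l * exp (I * l * x) * exp (-(I * k * x)) =
      a l * exp (I * (l - k : ℤ) * x) := by
    rw [mul_assoc, ← exp_add]; push_cast; ring_nf
  have key := integral_mul_exp_neg_I_int_mul (trigSum N a) k
  simp only [trigSum, Finset.sum_mul, hterm] at key
  rw [integral_finsetSum (f := fun l x ↦ a l * exp (I * (l - k : ℤ) * x)) fun l _ ↦
      (continuous_const.mul (continuous_exp_I_int_mul _)).intervalIntegrable _ _] at key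
  simp only [integral_const_mul, integral_exp_I_int_mul, sub_eq_zero, mul_ite, mul_zero,
    sum_ite_eq', hk, if_true] at key
  push_cast at key
  exact mul_left_cancel₀ hpi (key.symm.trans (mul_comm _ _))

theorem sum_Icc_neg {M : Type*} [AddCommMonoid M] (f : ℤ → M) :
    ∑ k ∈ Icc (-(N : ℤ)) N, f (-k) = ∑ k ∈ Icc (-(N : ℤ)) N, f k :=
  sum_nbij' (- ·) (- ·) (fun k hk ↦ by simp only [mem_Icc] at hk ⊢; omega)
    (fun k hk ↦ by simp only [mem_Icc] at hk ⊢; omega) (by simp) (by simp) (by simp)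

theorem integral_mul_trigSum {w : ℝ → ℂ} (hw : IntervalIntegrable w MeasureTheory.volume 0 (2 * π))
    (d : ℤ → ℂ) :
    ∫ x in (0 : ℝ)..2 * π, w x * trigSum N d x =
      2 * π * ∑ k ∈ Icc (-(N : ℤ)) N, d k * fc w (-k) := by
  have hterm (k : ℤ) (x : ℝ) :
      w x * (d k * exp (I * k * x)) = d k * (w x * exp (-(I * (-k : ℤ) * x))) := by
    push_cast; ring_nf
  simp only [trigSum, Finset.mul_sum, hterm]
  rw [integral_finsetSum (f := fun k x ↦ d k * (w x * exp (-(I * (-k : ℤ) * x)))) fun k _ ↦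
    (hw.mul_continuousOn (by fun_prop)).const_mul _]
  simp only [integral_const_mul, integral_mul_exp_neg_I_int_mul]
  exact sum_congr rfl fun k _ ↦ by ring

theorem integral_mul_deriv_SN_add_mul_deriv_eq_zero {u w : ℝ → ℂ} (hu : IsTrigPoly N u)
    (hw : IntervalIntegrable w MeasureTheory.volume 0 (2 * π)) :
    ∫ x in (0 : ℝ)..2 * π, (u x * deriv (SN N w) x + w x * deriv u x) = 0 := by
  obtain ⟨a, rfl⟩ := isTrigPoly_iff.mp hu
  rw [SN_eq_trigSum, deriv_trigSum, deriv_trigSum, integral_add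
    (Continuous.intervalIntegrable (by fun_prop) _ _)
    (hw.mul_continuousOn (continuous_trigSum _).continuousOn),
    integral_mul_trigSum ((continuous_trigSum a).intervalIntegrable _ _), integral_mul_trigSum hw,
    ← mul_add, ← sum_Icc_neg, ← sum_add_distrib]
  refine mul_eq_zero_of_right _ (sum_eq_zero fun k hk ↦ ?_)
  rw [neg_neg, fc_trigSum a hk]
  push_cast
  ring

theorem integral_re_mul_neg_deriv_SN_add_mul_neg_deriv_eq_zero {u w : ℝ → ℂ}
    (hu : IsTrigPoly N u) (hw : Continuous w) :
    ∫ x in (0 : ℝ)..2 * π, (u x * -deriv (SN N w) x + w x * -deriv u x).re = 0 := by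
  have hint : IntervalIntegrable (fun x ↦ u x * deriv (SN N w) x + w x * deriv u x)
      MeasureTheory.volume 0 (2 * π) := by
    obtain ⟨a, rfl⟩ := isTrigPoly_iff.mp hu
    simp only [SN_eq_trigSum, deriv_trigSum]
    exact Continuous.intervalIntegrable (by fun_prop) _ _
  have hre := intervalIntegral_re hint
  simp only [RCLike.re_to_complex] at hre
  simp only [mul_neg, ← neg_add, neg_re, integral_neg, hre,
    integral_mul_deriv_SN_add_mul_deriv_eq_zero hu (hw.intervalIntegrable _ _), zero_re, neg_zero]

theorem sum_range_exp_I_int_mul_eq_zero {M : ℕ} {m : ℤ} (hm : ¬(M : ℤ) ∣ m) :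
    ∑ j ∈ range M, exp (I * m * (2 * π * j / M : ℝ)) = 0 := by
  rcases eq_or_ne M 0 with rfl | hM
  · simp
  have hζ := isPrimitiveRoot_exp M hM
  set ζ := exp (2 * π * I / M)
  have hpow (j : ℕ) : exp (I * m * (2 * π * j / M : ℝ)) = (ζ ^ m) ^ j := by
    rw [← zpow_natCast, ← zpow_mul, ← exp_int_mul]
    push_cast
    ring_nf
  have hne : ζ ^ m ≠ 1 := by rwa [Ne, hζ.zpow_eq_one_iff_dvd]
  rw [sum_congr rfl fun j _ ↦ hpow j, geom_sum_eq hne, ← zpow_natCast, ← zpow_mul, mul_comm,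
    zpow_mul, zpow_natCast, hζ.pow_eq_one, one_zpow, sub_self, zero_div]

-- Unlike `fc`, these use only finitely many point values of `f`, so for a trigonometric
-- polynomial evolving in time its coefficients inherit the pointwise regularity in time.
noncomputable def dftCoeff (N : ℕ) (f : ℝ → ℂ) (k : ℤ) : ℂ :=
  ((2 * N + 1 : ℕ) : ℂ)⁻¹ * ∑ j ∈ range (2 * N + 1),
    f (2 * π * j / (2 * N + 1 : ℕ)) * exp (-(I * k * (2 * π * j / (2 * N + 1 : ℕ) : ℝ)))

theorem dftCoeff_trigSum (c : ℤ → ℂ) {k : ℤ} (hk : k ∈ Icc (-(N : ℤ)) N) :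
    dftCoeff N (trigSum N c) k = c k := by
  have hterm (l : ℤ) (x : ℝ) :
      c l * exp (I * l * x) * exp (-(I * k * x)) = c l * exp (I * (l - k : ℤ) * x) := by
    rw [mul_assoc, ← exp_add]; push_cast; ring_nf
  have horth : ∀ l ∈ Icc (-(N : ℤ)) N,
      c l * ∑ j ∈ range (2 * N + 1),
          exp (I * (l - k : ℤ) * (2 * π * j / (2 * N + 1 : ℕ) : ℝ)) =
        if l = k then c l * (2 * N + 1 : ℕ) else 0 := by
    intro l hl
    split_ifs with hlk
    · simp [hlk]
    · refine mul_eq_zero_of_right _ (sum_range_exp_I_int_mul_eq_zero fun hdvd ↦ hlk ?_)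
      have := Int.eq_zero_of_abs_lt_dvd hdvd
        (by rw [abs_lt]; simp only [mem_Icc] at hl hk; push_cast; omega)
      omega
  unfold dftCoeff trigSum
  simp only [sum_mul, hterm]
  rw [sum_comm]
  simp only [← mul_sum]
  rw [sum_congr rfl horth, sum_ite_eq' _ k, if_pos hk]
  have hM : ((2 * N + 1 : ℕ) : ℂ) ≠ 0 := Nat.cast_ne_zero.mpr (Nat.succ_ne_zero _)
  field_simp

theorem _root_.IsTrigPoly.eq_trigSum_dftCoeff {f : ℝ → ℂ} (hf : IsTrigPoly N f) :
    f = trigSum N (dftCoeff N f) := by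
  obtain ⟨c, rfl⟩ := isTrigPoly_iff.mp hf
  funext x
  exact sum_congr rfl fun k hk ↦ by rw [dftCoeff_trigSum c hk]

section Parametric

variable {X : Type*} [TopologicalSpace X]

theorem continuous_dftCoeff {u : X → ℝ → ℂ} (hu : ∀ x, Continuous (u · x)) (k : ℤ) :
    Continuous fun τ ↦ dftCoeff N (u τ) k :=
  continuous_const.mul (continuous_finsetSum _ fun _ _ ↦ (hu _).mul continuous_const)

theorem continuous_uncurry_of_isTrigPoly {u : X → ℝ → ℂ} (hpoly : ∀ τ, IsTrigPoly N (u τ))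
    (hu : ∀ x, Continuous (u · x)) : Continuous (Function.uncurry u) := by
  have h : Function.uncurry u = fun p ↦ trigSum N (dftCoeff N (u p.1)) p.2 :=
    funext fun p ↦ congrFun (hpoly p.1).eq_trigSum_dftCoeff p.2
  rw [h]
  exact continuous_uncurry_trigSum (continuous_dftCoeff hu)

theorem continuous_uncurry_deriv_of_isTrigPoly {u : X → ℝ → ℂ}
    (hpoly : ∀ τ, IsTrigPoly N (u τ)) (hu : ∀ x, Continuous (u · x)) :
    Continuous (Function.uncurry fun τ ↦ deriv (u τ)) := by
  have h : (Function.uncurry fun τ ↦ deriv (u τ)) =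
      fun p ↦ trigSum N (fun k ↦ I * k * dftCoeff N (u p.1) k) p.2 :=
    funext fun p ↦ by rw [← deriv_trigSum, ← (hpoly p.1).eq_trigSum_dftCoeff]; rfl
  rw [h]
  exact continuous_uncurry_trigSum fun k ↦ continuous_const.mul (continuous_dftCoeff hu k)

theorem continuous_fc {w : X → ℝ → ℂ} (hw : Continuous (Function.uncurry w)) (k : ℤ) :
    Continuous fun τ ↦ fc (w τ) k := by
  unfold fc
  exact (continuous_const (y := 1 / (2 * π))).smul
    (continuous_parametric_intervalIntegral_of_continuous' (μ := MeasureTheory.volume)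
      (f := fun τ x ↦ w τ x * exp (-(I * k * x))) (hw.mul (by fun_prop)) _ _)

theorem continuous_uncurry_deriv_SN {w : X → ℝ → ℂ} (hw : Continuous (Function.uncurry w)) :
    Continuous (Function.uncurry fun τ ↦ deriv (SN N (w τ))) := by
  simp only [SN_eq_trigSum, deriv_trigSum]
  exact continuous_uncurry_trigSum fun k ↦ continuous_const.mul (continuous_fc hw k)

end Parametric

end TrigPoly

theorem hasDerivAt_intervalIntegral_of_continuous_uncurry_deriv {E : Type*}
    [NormedAddCommGroup E] [NormedSpace ℝ E] {F F' : ℝ → ℝ → E} {a b t : ℝ}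
    (hF : ∀ τ, Continuous (F τ)) (hF' : Continuous (Function.uncurry F'))
    (hderiv : ∀ τ x, HasDerivAt (F · x) (F' τ x) τ) :
    HasDerivAt (fun τ ↦ ∫ x in a..b, F τ x) (∫ x in a..b, F' t x) t := by
  obtain ⟨C, hC⟩ := ((isCompact_closedBall t 1).prod isCompact_uIcc).exists_bound_of_continuousOn
    hF'.continuousOn
  refine (intervalIntegral.hasDerivAt_integral_of_dominated_loc_of_deriv_le (bound := fun _ ↦ C)
    (Metric.ball_mem_nhds t one_pos)
    (Filter.Eventually.of_forall fun τ ↦ (hF τ).aestronglyMeasurable)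
    ((hF t).intervalIntegrable _ _) (hF'.comp (Continuous.prodMk_right t)).aestronglyMeasurable
    ?_ intervalIntegrable_const (MeasureTheory.ae_of_all _ fun x _ τ _ ↦ hderiv τ x)).2
  exact MeasureTheory.ae_of_all _ fun x hx τ hτ ↦
    hC (τ, x) ⟨Metric.ball_subset_closedBall hτ, Set.uIoc_subset_uIcc hx⟩

theorem HasDerivAt.sq_norm_div_two_add_comp_re {a b : ℝ → ℂ} {a' b' : ℂ} {Q : ℝ → ℝ} {r t : ℝ}
    (ha : HasDerivAt a a' t) (hat : (a t).im = 0) (hb : HasDerivAt b b' t)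
    (hQ : HasDerivAt Q r (b t).re) :
    HasDerivAt (fun σ ↦ ‖a σ‖ ^ 2 / 2 + Q (b σ).re) (a t * a' + r * b').re t := by
  have hb_re : HasDerivAt (fun σ ↦ (b σ).re) b'.re t := reCLM.hasFDerivAt.comp_hasDerivAt t hb
  refine ((ha.norm_sq.div_const 2).add (hQ.comp t hb_re)).congr_deriv ?_
  simp only [Complex.inner, add_re, mul_re, ofReal_re, ofReal_im, conj_re, conj_im, hat]
  ring

open TrigPoly

theorem stmt_19_general (N : ℕ) (q q' Q : ℝ → ℝ)
    (hq : ∀ y, HasDerivAt q (q' y) y)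
    (hQ : ∀ y, HasDerivAt Q (q y) y)
    (uN vN : ℝ → ℝ → ℂ)
    (hureal : ∀ t x, (uN t x).im = 0)
    (hupoly : ∀ t, IsTrigPoly N (uN t)) (hvpoly : ∀ t, IsTrigPoly N (vN t))
    (hpde1 : ∀ t x, HasDerivAt (fun τ => uN τ x)
        (-(deriv (fun y => SN N (fun z => ((q ((vN t z).re) : ℝ) : ℂ)) y) x)) t)
    (hpde2 : ∀ t x, HasDerivAt (fun τ => vN τ x)
        (-(deriv (fun y => uN t y) x)) t)
    (t : ℝ) :
    HasDerivAt (fun τ => ∫ x in (0 : ℝ)..(2 * Real.pi),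
        (‖uN τ x‖ ^ 2 / 2 + Q ((vN τ x).re))) 0 t := by
  set w : ℝ → ℝ → ℂ := fun τ z ↦ ((q (vN τ z).re : ℝ) : ℂ)
  have hq_cont : Continuous q := Differentiable.continuous fun y ↦ (hq y).differentiableAt
  have hQ_cont : Continuous Q := Differentiable.continuous fun y ↦ (hQ y).differentiableAt
  have hu_time (x : ℝ) : Continuous (uN · x) :=
    Differentiable.continuous fun τ ↦ (hpde1 τ x).differentiableAt
  have hu_cont := continuous_uncurry_of_isTrigPoly hupoly hu_time
  have hv_cont := continuous_uncurry_of_isTrigPoly hvpoly fun x ↦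
    Differentiable.continuous fun τ ↦ (hpde2 τ x).differentiableAt
  have hw_cont : Continuous (Function.uncurry w) := by fun_prop
  have hflux_cont := continuous_uncurry_deriv_SN (N := N) hw_cont
  have hux_cont := continuous_uncurry_deriv_of_isTrigPoly hupoly hu_time
  have hentropy (τ x : ℝ) := (hpde1 τ x).sq_norm_div_two_add_comp_re (hureal τ x) (hpde2 τ x)
    (hQ (vN τ x).re)
  exact (hasDerivAt_intervalIntegral_of_continuous_uncurry_deriv
    (fun τ ↦ by fun_prop) (by fun_prop) hentropy).congr_deriv
    (integral_re_mul_neg_deriv_SN_add_mul_neg_deriv_eq_zero (hupoly t) (hw_cont.uncurry_left t))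

/-- **Total entropy conservation for the spectral approximation of the 1D
isentropic Lagrangian equations.** If the real-valued `N`-degree trigonometric polynomials
`(u_N, v_N)` solve `∂_t u_N + ∂_x S_N q(v_N) = 0`, `∂_t v_N + ∂_x u_N = 0` on the circle
with `q' > 0`, then `d/dt ∫ (|u_N|²/2 + Q(v_N)) dx = 0`, where `Q' = q`. -/
theorem stmt_19 (N : ℕ) (q q' Q : ℝ → ℝ)
    (hq : ∀ y, HasDerivAt q (q' y) y) (hq'pos : ∀ y, 0 < q' y)
    (hQ : ∀ y, HasDerivAt Q (q y) y)
    (uN vN : ℝ → ℝ → ℂ)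
    (hureal : ∀ t x, (uN t x).im = 0) (hvreal : ∀ t x, (vN t x).im = 0)
    (hupoly : ∀ t, IsTrigPoly N (uN t)) (hvpoly : ∀ t, IsTrigPoly N (vN t))
    (hpde1 : ∀ t x, HasDerivAt (fun τ => uN τ x)
        (-(deriv (fun y => SN N (fun z => ((q ((vN t z).re) : ℝ) : ℂ)) y) x)) t)
    (hpde2 : ∀ t x, HasDerivAt (fun τ => vN τ x)
        (-(deriv (fun y => uN t y) x)) t)
    (t : ℝ) :
    HasDerivAt (fun τ => ∫ x in (0 : ℝ)..(2 * Real.pi),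
        (‖uN τ x‖ ^ 2 / 2 + Q ((vN τ x).re))) 0 t :=
  stmt_19_general N q q' Q hq hQ uN vN hureal hupoly hvpoly hpde1 hpde2 t
end
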